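/- arXiv:2204.09160 — 5 statements merged into one kernel-verified Lean document; each statement's English description precedes it below -/
import Mathlib

section
/- Let $m_i, m_j > 0$, let $n \geq 2$ be an integer, and let $\theta \in [0, n^{-1/2}]$. Then $1 - \Big(\frac{m_i^2+m_j^2+2m_i m_j\cos\theta}{(m_i+m_j)^2}\Big)^n - \Big(\frac{2 m_i m_j (1-\cos\theta)}{(m_i+m_j)^2}\Big)^n \geq \frac{m_i m_j (m_i^2+m_j^2+m_i m_j)}{2 (m_i+m_j)^4}\, n\, \theta^2$. -/
set_option maxHeartbeats 1000000

lemma pow_one_sub_le_aux (x : ℝ) (hx0 : 0 ≤ x) (hx1 : x ≤ 1) (n : ℕ) :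
    (1 - x) ^ n ≤ 1 - n * x + (n : ℝ) ^ 2 * x ^ 2 / 2 := by
  induction n with
  | zero => simp
  | succ n ih =>
    have h1 : (0:ℝ) ≤ 1 - x := by linarith
    calc (1 - x) ^ (n + 1) = (1 - x) ^ n * (1 - x) := pow_succ _ _
      _ ≤ (1 - n * x + (n : ℝ) ^ 2 * x ^ 2 / 2) * (1 - x) :=
          mul_le_mul_of_nonneg_right ih h1
      _ ≤ 1 - (n + 1 : ℕ) * x + ((n + 1 : ℕ) : ℝ) ^ 2 * x ^ 2 / 2 := by
          push_cast
          nlinarith [sq_nonneg x, mul_nonneg (mul_nonneg hx0 hx0) hx0,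
            sq_nonneg ((n : ℝ) * x), mul_nonneg (mul_nonneg (sq_nonneg ((n:ℝ))) (sq_nonneg x)) hx0]

theorem povzner_coercivity_estimate
    (mi mj : ℝ) (hmi : 0 < mi) (hmj : 0 < mj)
    (n : ℕ) (hn : 2 ≤ n)
    (θ : ℝ) (hθ0 : 0 ≤ θ) (hθ1 : θ ≤ ((n : ℝ)) ^ (-(1:ℝ)/2)) :
    mi * mj * (mi ^ 2 + mj ^ 2 + mi * mj) / (2 * (mi + mj) ^ 4) * n * θ ^ 2 ≤
      1 - ((mi ^ 2 + mj ^ 2 + 2 * mi * mj * Real.cos θ) / (mi + mj) ^ 2) ^ n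
        - (2 * mi * mj * (1 - Real.cos θ) / (mi + mj) ^ 2) ^ n := by
  have hs : (0:ℝ) < (mi + mj) ^ 2 := by positivity
  obtain ⟨a, ha_def⟩ : ∃ a : ℝ, a = 2 * mi * mj / (mi + mj) ^ 2 := ⟨_, rfl⟩
  obtain ⟨x, hx_def⟩ : ∃ x : ℝ, x = a * (1 - Real.cos θ) := ⟨_, rfl⟩
  have ha : 0 < a := by rw [ha_def]; positivity
  have ha2 : a ≤ 1 / 2 := by
    rw [ha_def, div_le_iff₀ hs]; nlinarith [sq_nonneg (mi - mj)]
  have hn0 : (0:ℝ) < n := by positivity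
  have hn2 : (2:ℝ) ≤ n := by exact_mod_cast hn
  -- θ² ≤ 1/n
  have ht : ((n:ℝ) ^ (-(1:ℝ)/2)) ^ 2 = ((n:ℝ))⁻¹ := by
    rw [← Real.rpow_natCast ((n:ℝ) ^ (-(1:ℝ)/2)) 2, ← Real.rpow_mul hn0.le]
    norm_num
    exact Real.rpow_neg_one _
  have hθsq : θ ^ 2 ≤ ((n:ℝ))⁻¹ := by
    rw [← ht]; exact pow_le_pow_left₀ hθ0 hθ1 2
  have hθ2n : (n:ℝ) * θ ^ 2 ≤ 1 := by
    have := mul_le_mul_of_nonneg_left hθsq hn0.le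
    rwa [mul_inv_cancel₀ hn0.ne'] at this
  have hnθ4 : (n:ℝ) * θ ^ 4 ≤ θ ^ 2 := by nlinarith [sq_nonneg θ]
  -- |θ| ≤ 1
  have hθle1 : θ ≤ 1 := by
    refine hθ1.trans (Real.rpow_le_one_of_one_le_of_nonpos ?_ (by norm_num))
    exact_mod_cast Nat.one_le_of_lt hn
  -- cosine bounds
  have hc2 : 1 - θ ^ 2 / 2 ≤ Real.cos θ := Real.one_sub_sq_div_two_le_cos
  have hc3 : Real.cos θ ≤ 1 - θ ^ 2 / 2 + θ ^ 4 * (5 / 96) := by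
    have hb := Real.cos_bound (x := θ) (by rw [abs_of_nonneg hθ0]; exact hθle1)
    rw [abs_of_nonneg hθ0] at hb
    have := (abs_le.mp hb).2
    linarith
  -- bounds on x
  have hx0 : 0 ≤ x := by
    have := Real.cos_le_one θ
    have : (0:ℝ) ≤ 1 - Real.cos θ := by linarith
    rw [hx_def]; exact mul_nonneg ha.le this
  have hxhi : x ≤ a * θ ^ 2 / 2 := by
    rw [hx_def]; nlinarith [ha.le]
  have hxlo : a * (θ ^ 2 / 2 - 5 * θ ^ 4 / 96) ≤ x := by
    rw [hx_def]; nlinarith [ha.le]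
  have hθ2half : θ ^ 2 ≤ 1 / 2 := by
    have : ((n:ℝ))⁻¹ ≤ 1 / 2 := by
      rw [inv_le_comm₀ (by positivity) (by norm_num)]; norm_num; linarith
    linarith
  have hx1 : x ≤ 1 := by nlinarith
  -- power bounds
  have hpow := pow_one_sub_le_aux x hx0 hx1 n
  have hxn : x ^ n ≤ x ^ 2 := pow_le_pow_of_le_one hx0 hx1 hn
  -- rewrite goal bases
  have e1 : (mi ^ 2 + mj ^ 2 + 2 * mi * mj * Real.cos θ) / (mi + mj) ^ 2 = 1 - x := by
    rw [hx_def, ha_def]; field_simp; ring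
  have e2 : 2 * mi * mj * (1 - Real.cos θ) / (mi + mj) ^ 2 = x := by
    rw [hx_def, ha_def]; field_simp
  have eK : mi * mj * (mi ^ 2 + mj ^ 2 + mi * mj) / (2 * (mi + mj) ^ 4)
      = a / 4 - a ^ 2 / 8 := by
    rw [ha_def]; field_simp; ring
  rw [e1, e2, eK]
  -- key component estimates
  have hA : (n:ℝ) * a * θ ^ 2 / 2 - 5 * a * θ ^ 2 / 96 ≤ (n:ℝ) * x := by
    have h1 : (n:ℝ) * (a * (θ ^ 2 / 2 - 5 * θ ^ 4 / 96)) ≤ (n:ℝ) * x :=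
      mul_le_mul_of_nonneg_left hxlo hn0.le
    nlinarith [mul_nonneg ha.le (sub_nonneg.mpr hnθ4)]
  have hx2 : x ^ 2 ≤ (a * θ ^ 2 / 2) ^ 2 := pow_le_pow_left₀ hx0 hxhi 2
  have hn2θ4 : (n:ℝ) ^ 2 * θ ^ 4 ≤ (n:ℝ) * θ ^ 2 := by
    have := mul_le_mul_of_nonneg_left hnθ4 hn0.le
    nlinarith
  have hB : (n:ℝ) ^ 2 * x ^ 2 / 2 ≤ (n:ℝ) * a ^ 2 * θ ^ 2 / 8 := by
    have h1 : (n:ℝ) ^ 2 * x ^ 2 ≤ (n:ℝ) ^ 2 * (a * θ ^ 2 / 2) ^ 2 :=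
      mul_le_mul_of_nonneg_left hx2 (sq_nonneg _)
    nlinarith [mul_nonneg (sq_nonneg a) (sub_nonneg.mpr hn2θ4)]
  have hC : x ^ 2 ≤ a ^ 2 * θ ^ 2 / 8 := by
    have hθ4 : θ ^ 4 ≤ θ ^ 2 / 2 := by nlinarith [sq_nonneg θ]
    nlinarith [sq_nonneg a]
  -- conclude
  have hres : (a / 4 - a ^ 2 / 8) * n * θ ^ 2 ≤
      ((n:ℝ) * a * θ ^ 2 / 2 - 5 * a * θ ^ 2 / 96)
        - (n:ℝ) * a ^ 2 * θ ^ 2 / 8 - a ^ 2 * θ ^ 2 / 8 := by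
    nlinarith [mul_nonneg (mul_nonneg (sub_nonneg.mpr hn2) ha.le) (sq_nonneg θ),
      mul_nonneg (mul_nonneg (sub_nonneg.mpr ha2) ha.le) (sq_nonneg θ),
      mul_nonneg ha.le (sq_nonneg θ)]
  linarith [hpow, hxn, hA, hB, hC, hres]
end

section
/- Let $\mu$ and $\nu$ be measures on $\mathbb{R}^3$, let $m_i, m_j > 0$, and define moments $\mathbf{m}_{k,i}[f] = \int \langle v\rangle_i^k \, d\mu$ and $\mathbf{m}_{k,j}[g] = \int \langle v\rangle_j^k \, d\nu$ where $\langle v\rangle_i = \sqrt{1+m_i|v|^2}$. Then for all reals $b \ge a \ge 0$ and $\beta > 0$, with $\theta = \frac{\beta}{b+\beta-a} \in (0,1]$, provided all moments appearing are finite, $\mathbf{m}_{a+\beta,i}[f]\, \mathbf{m}_{b,j}[g] \leq \theta\, \mathbf{m}_{b+\beta,i}[f]\, \mathbf{m}_{a,j}[g] + (1-\theta)\, \mathbf{m}_{b+\beta,j}[g]\, \mathbf{m}_{a,i}[f]$. -/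
open MeasureTheory

lemma moment_interp {α : Type*} [MeasurableSpace α] (μ : Measure α)
    (w : α → ℝ) (hw : ∀ x, 1 ≤ w x) (hwm : AEMeasurable w μ)
    (c d θ : ℝ) (hθ0 : 0 ≤ θ) (hθ1 : θ ≤ 1)
    (hc : Integrable (fun x => w x ^ c) μ) (hd : Integrable (fun x => w x ^ d) μ) :
    ∫ x, w x ^ (θ * c + (1 - θ) * d) ∂μ ≤
      (∫ x, w x ^ c ∂μ) ^ θ * (∫ x, w x ^ d ∂μ) ^ (1 - θ) := by
  have hwpos : ∀ x, 0 < w x := fun x => lt_of_lt_of_le one_pos (hw x)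
  have hnn : ∀ (k : ℝ) (x : α), 0 ≤ w x ^ k := fun k x => Real.rpow_nonneg (hwpos x).le k
  have hmeas : ∀ k : ℝ, AEMeasurable (fun x => w x ^ k) μ := by
    intro k
    have : (fun x => w x ^ k) = fun x => Real.exp (k * Real.log (w x)) := by
      funext x; rw [Real.rpow_def_of_pos (hwpos x), mul_comm]
    rw [this]
    exact (Real.measurable_exp.comp_aemeasurable
      ((Real.measurable_log.comp_aemeasurable hwm).const_mul k))
  have hmeas' : ∀ k : ℝ, AEStronglyMeasurable (fun x => w x ^ k) μ := fun k =>
    (hmeas k).aestronglyMeasurable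
  -- integrals as lintegrals
  have key : ∀ k : ℝ, ∫ x, w x ^ k ∂μ =
      (∫⁻ x, ENNReal.ofReal (w x ^ k) ∂μ).toReal := fun k =>
    integral_eq_lintegral_of_nonneg_ae (Filter.Eventually.of_forall (hnn k)) (hmeas' k)
  rw [key, key, key]
  set F : α → ENNReal := fun x => ENNReal.ofReal (w x ^ c) with hF
  set G : α → ENNReal := fun x => ENNReal.ofReal (w x ^ d) with hG
  have hFm : AEMeasurable F μ := (hmeas c).ennreal_ofReal
  have hGm : AEMeasurable G μ := (hmeas d).ennreal_ofReal
  have hFfin : ∫⁻ x, F x ∂μ < ⊤ := hc.lintegral_lt_top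
  have hGfin : ∫⁻ x, G x ∂μ < ⊤ := hd.lintegral_lt_top
  have hpt : ∀ x, ENNReal.ofReal (w x ^ (θ * c + (1 - θ) * d)) = F x ^ θ * G x ^ (1 - θ) := by
    intro x
    have h1 : w x ^ (θ * c + (1 - θ) * d) = (w x ^ c) ^ θ * (w x ^ d) ^ (1 - θ) := by
      rw [← Real.rpow_mul (hwpos x).le, ← Real.rpow_mul (hwpos x).le,
        ← Real.rpow_add (hwpos x)]
      ring_nf
    rw [h1, ENNReal.ofReal_mul (Real.rpow_nonneg (hnn c x) θ),
      ENNReal.ofReal_rpow_of_pos (Real.rpow_pos_of_pos (hwpos x) c),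
      ENNReal.ofReal_rpow_of_pos (Real.rpow_pos_of_pos (hwpos x) d)]
  calc (∫⁻ x, ENNReal.ofReal (w x ^ (θ * c + (1 - θ) * d)) ∂μ).toReal
      = (∫⁻ x, F x ^ θ * G x ^ (1 - θ) ∂μ).toReal := by simp_rw [hpt]
    _ ≤ ((∫⁻ x, F x ∂μ) ^ θ * (∫⁻ x, G x ∂μ) ^ (1 - θ)).toReal := by
        apply ENNReal.toReal_mono
        · exact ENNReal.mul_ne_top (ENNReal.rpow_ne_top_of_nonneg hθ0 hFfin.ne)
            (ENNReal.rpow_ne_top_of_nonneg (by linarith) hGfin.ne)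
        · exact ENNReal.lintegral_mul_norm_pow_le hFm hGm hθ0 (by linarith) (by ring)
    _ = (∫⁻ x, F x ∂μ).toReal ^ θ * (∫⁻ x, G x ∂μ).toReal ^ (1 - θ) := by
        rw [ENNReal.toReal_mul, ENNReal.toReal_rpow, ENNReal.toReal_rpow]
theorem mixed_moment_interpolation
    (μ ν : Measure (EuclideanSpace ℝ (Fin 3)))
    (mi mj : ℝ) (hmi : 0 < mi) (hmj : 0 < mj)
    (a b β : ℝ) (ha : 0 ≤ a) (hab : a ≤ b) (hβ : 0 < β)
    (m_i : ℝ → ℝ) (m_j : ℝ → ℝ)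
    (hm_i : ∀ k, m_i k = ∫ v, (Real.sqrt (1 + mi * ‖v‖ ^ 2)) ^ k ∂μ)
    (hm_j : ∀ k, m_j k = ∫ v, (Real.sqrt (1 + mj * ‖v‖ ^ 2)) ^ k ∂ν)
    (hInt_i : ∀ k ∈ ({a, b, a + β, b + β} : Set ℝ),
      Integrable (fun v => (Real.sqrt (1 + mi * ‖v‖ ^ 2)) ^ k) μ)
    (hInt_j : ∀ k ∈ ({a, b, a + β, b + β} : Set ℝ),
      Integrable (fun v => (Real.sqrt (1 + mj * ‖v‖ ^ 2)) ^ k) ν)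
    (θ : ℝ) (hθ : θ = β / (b + β - a)) :
    m_i (a + β) * m_j b ≤ θ * m_i (b + β) * m_j a + (1 - θ) * m_j (b + β) * m_i a := by
  have hba : 0 < b + β - a := by linarith
  have hθ0 : 0 ≤ θ := by rw [hθ]; exact div_nonneg hβ.le hba.le
  have hθ1 : θ ≤ 1 := by rw [hθ, div_le_one hba]; linarith
  have hθβ : θ * (b + β - a) = β := by rw [hθ]; field_simp
  have hw1 : ∀ (m : ℝ), 0 < m → ∀ v : EuclideanSpace ℝ (Fin 3),
      1 ≤ Real.sqrt (1 + m * ‖v‖ ^ 2) := by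
    intro m hm v
    rw [Real.one_le_sqrt]
    nlinarith [mul_nonneg hm.le (sq_nonneg ‖v‖)]
  have hwm : ∀ (m : ℝ), Continuous (fun v : EuclideanSpace ℝ (Fin 3) =>
      Real.sqrt (1 + m * ‖v‖ ^ 2)) := by
    intro m
    exact Real.continuous_sqrt.comp (by continuity)
  -- nonnegativity of moments
  have hmi_nn : ∀ k, 0 ≤ m_i k := fun k => by
    rw [hm_i]; exact integral_nonneg fun v => Real.rpow_nonneg (Real.sqrt_nonneg _) k
  have hmj_nn : ∀ k, 0 ≤ m_j k := fun k => by
    rw [hm_j]; exact integral_nonneg fun v => Real.rpow_nonneg (Real.sqrt_nonneg _) k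
  -- interpolation for i
  have h_i : m_i (a + β) ≤ m_i (b + β) ^ θ * m_i a ^ (1 - θ) := by
    have e1 : a + β = θ * (b + β) + (1 - θ) * a := by linear_combination -hθβ
    rw [hm_i, hm_i, hm_i, e1]
    exact moment_interp μ _ (hw1 mi hmi) ((hwm mi).aemeasurable) (b + β) a θ hθ0 hθ1
      (hInt_i _ (by simp)) (hInt_i _ (by simp))
  have h_j : m_j b ≤ m_j (b + β) ^ (1 - θ) * m_j a ^ θ := by
    have h := moment_interp ν _ (hw1 mj hmj) ((hwm mj).aemeasurable) (b + β) a (1 - θ)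
      (by linarith) (by linarith) (hInt_j _ (by simp)) (hInt_j _ (by simp))
    simp only [show (1:ℝ) - (1 - θ) = θ from by ring] at h
    rw [show (1 - θ) * (b + β) + θ * a = b from by linear_combination -hθβ] at h
    rw [hm_j, hm_j, hm_j]
    exact h
  set A := m_i (b + β); set B := m_i a; set C := m_j (b + β); set D := m_j a
  have step1 : m_i (a + β) * m_j b ≤ (A ^ θ * B ^ (1 - θ)) * (C ^ (1 - θ) * D ^ θ) :=
    mul_le_mul h_i h_j (hmj_nn b) (mul_nonneg (Real.rpow_nonneg (hmi_nn _) _) (Real.rpow_nonneg (hmi_nn _) _))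
  have step2 : (A ^ θ * B ^ (1 - θ)) * (C ^ (1 - θ) * D ^ θ)
      = (A * D) ^ θ * (B * C) ^ (1 - θ) := by
    rw [Real.mul_rpow (hmi_nn _) (hmj_nn _), Real.mul_rpow (hmi_nn _) (hmj_nn _)]
    ring
  have step3 : (A * D) ^ θ * (B * C) ^ (1 - θ) ≤ θ * (A * D) + (1 - θ) * (B * C) :=
    Real.geom_mean_le_arith_mean2_weighted hθ0 (by linarith)
      (mul_nonneg (hmi_nn _) (hmj_nn _)) (mul_nonneg (hmi_nn _) (hmj_nn _)) (by ring)
  calc m_i (a + β) * m_j b ≤ (A * D) ^ θ * (B * C) ^ (1 - θ) := step2 ▸ step1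
    _ ≤ θ * (A * D) + (1 - θ) * (B * C) := step3
    _ = θ * A * D + (1 - θ) * C * B := by ring
end

section
/- Let $p \in (1,\infty)$ and set $p' = \frac{p}{p-1}$. Then for all real numbers $x > 0$ and $y \geq 0$: $x\,(y^{p-1} - x^{p-1}) \leq \frac{1}{p'}\,(y^{p} - x^{p}) - \frac{1}{\max\{p,p'\}}\,(y^{p/2} - x^{p/2})^{2}$. -/
/-!
With `u = x ^ (p / 2)`, `v = y ^ (p / 2)` and the weights `a = 1 / p`, `b = 1 / p'` (so `a + b = 1`),
the inequality reads `u ^ (2a) v ^ (2b) + min a b (u - v) ^ 2 ≤ a u ^ 2 + b v ^ 2`.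
For `a ≤ b` the right-hand side minus `a (u - v) ^ 2` is `2a · uv + (b - a) · v ^ 2`, a convex
combination of `uv` and `v ^ 2`, which dominates their weighted geometric mean
`(uv) ^ (2a) (v ^ 2) ^ (b - a) = u ^ (2a) v ^ (2b)`.
-/

open Real

theorem rpow_mul_rpow_add_mul_sq_le_of_le {a b u v : ℝ} (ha : 0 ≤ a) (hab : a ≤ b)
    (hsum : a + b = 1) (hu : 0 ≤ u) (hv : 0 ≤ v) :
    u ^ (2 * a) * v ^ (2 * b) + a * (u - v) ^ 2 ≤ a * u ^ 2 + b * v ^ 2 := by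
  have amgm := geom_mean_le_arith_mean2_weighted (by linarith : 0 ≤ 2 * a)
    (by linarith : 0 ≤ b - a) (mul_nonneg hu hv) (sq_nonneg v) (by linarith)
  have hgeom : (u * v) ^ (2 * a) * (v ^ 2) ^ (b - a) = u ^ (2 * a) * v ^ (2 * b) := by
    rw [mul_rpow hu hv, ← rpow_natCast_mul hv, mul_assoc,
      ← rpow_add' hv (by push_cast; linarith)]
    push_cast
    ring_nf
  rw [hgeom] at amgm
  linarith

theorem rpow_mul_rpow_add_min_mul_sq_le {a b u v : ℝ} (ha : 0 ≤ a) (hb : 0 ≤ b)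
    (hsum : a + b = 1) (hu : 0 ≤ u) (hv : 0 ≤ v) :
    u ^ (2 * a) * v ^ (2 * b) + min a b * (u - v) ^ 2 ≤ a * u ^ 2 + b * v ^ 2 := by
  rcases le_total a b with hab | hba
  · rw [min_eq_left hab]
    exact rpow_mul_rpow_add_mul_sq_le_of_le ha hab hsum hu hv
  · rw [min_eq_right hba]
    linear_combination rpow_mul_rpow_add_mul_sq_le_of_le hb hba (by linarith) hv hu

theorem inv_max_of_pos {a b : ℝ} (ha : 0 < a) (hb : 0 < b) : (max a b)⁻¹ = min a⁻¹ b⁻¹ := by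
  rcases le_total a b with hab | hba
  · rw [max_eq_right hab, min_eq_right (inv_anti₀ ha hab)]
  · rw [max_eq_left hba, min_eq_left (inv_anti₀ hb hba)]

theorem lp_pointwise_inequality (p : ℝ) (hp : 1 < p) (p' : ℝ) (hp' : p' = p / (p - 1))
    (x y : ℝ) (hx : 0 < x) (hy : 0 ≤ y) :
    x * (y ^ (p - 1) - x ^ (p - 1)) ≤
      1 / p' * (y ^ p - x ^ p) - 1 / max p p' * (y ^ (p / 2) - x ^ (p / 2)) ^ 2 := by
  have hpq : p.HolderConjugate p' := (holderConjugate_iff_eq_conjExponent hp).2 hp'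
  have key := rpow_mul_rpow_add_min_mul_sq_le hpq.inv_nonneg hpq.symm.inv_nonneg
    hpq.inv_add_inv_eq_one (rpow_nonneg hx.le (p / 2)) (rpow_nonneg hy (p / 2))
  have hpow : ∀ {z : ℝ}, 0 ≤ z → ∀ c : ℝ, (z ^ (p / 2)) ^ (2 * c) = z ^ (p * c) :=
    fun hz c ↦ by rw [← rpow_mul hz]; ring_nf
  have hsq : ∀ {z : ℝ}, 0 ≤ z → (z ^ (p / 2)) ^ 2 = z ^ p := fun hz ↦ by
    simpa using hpow hz 1
  rw [hpow hx.le, hpow hy, mul_inv_cancel₀ hpq.ne_zero, ← div_eq_mul_inv,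
    hpq.div_conj_eq_sub_one, rpow_one, hsq hx.le, hsq hy] at key
  have hxx : x * x ^ (p - 1) = x ^ p := by
    rw [← rpow_one_add' hx.le (by linarith)]
    ring_nf
  rw [mul_sub, hxx, one_div, one_div, inv_max_of_pos hpq.pos hpq.symm.pos]
  linear_combination key + x ^ p * hpq.inv_add_inv_eq_one
end

section
/- Let $a, c, B > 0$ and let $X : (0,\infty) \to [0,\infty)$ be differentiable with $X'(t) + a\, X(t)^{1+c} \leq B$ for all $t > 0$. Then for all $t > 0$, $X(t) \leq \Big(\frac{B}{a}\Big)^{\frac{1}{1+c}} + \Big(\frac{1}{c\,a}\Big)^{\frac{1}{c}}\, t^{-\frac{1}{c}}$. -/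
/-!
For `L > (1/(ca))^(1/c)`, `ε > 0` and `K = (B/a)^(1/(1+c))`, the function
`Z(s) = K + L (s - ε)^(-1/c)` is a strict super-solution of `y' + a y^(1+c) = B` on `(ε, ∞)` which
is infinite at `s = ε`. Since `X` is bounded near `ε`, it starts below `Z`, and at a first contact
point we would have `X' ≤ B - a Z^(1+c) < Z'`, which is impossible; so `X ≤ Z`. Letting `L` decrease
to `(1/(ca))^(1/c)` and `ε` to `0` gives the bound, uniformly in the initial datum.
-/

open Real Filter Set Topology

/-- `(1/(ca))^(1/c) s^(-1/c)` solves `y' + a y^(1+c) = 0` exactly; enlarging the constant makes it a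
strict super-solution, and superadditivity of `y ↦ y^(1+c)` lets the constant `K` absorb `B`. -/
lemma lt_deriv_add_mul_rpow_barrier {a c K L s : ℝ} (ha : 0 < a) (hc : 0 < c) (hK : 0 ≤ K)
    (hL : 0 < L) (hLc : 1 / (c * a) < L ^ c) (hs : 0 < s) :
    a * K ^ (1 + c) < -(L / c) * s ^ (-(1 / c) - 1) + a * (K + L * s ^ (-(1 / c))) ^ (1 + c) := by
  have hm : 0 ≤ L * s ^ (-(1 / c)) := by positivity
  have hpow : (L * s ^ (-(1 / c))) ^ (1 + c) = L ^ c * L * s ^ (-(1 / c) - 1) := by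
    rw [mul_rpow hL.le (by positivity), ← rpow_mul hs.le, rpow_add hL, rpow_one]
    rw [mul_comm L, show -(1 / c) * (1 + c) = -(1 / c) - 1 by field_simp; ring]
  have hsuper : K ^ (1 + c) + (L * s ^ (-(1 / c))) ^ (1 + c) ≤ (K + L * s ^ (-(1 / c))) ^ (1 + c) :=
    add_rpow_le_rpow_add hK hm (by linarith)
  have hLa : L / c < a * (L ^ c * L) := by
    rw [div_lt_iff₀ hc]
    rw [div_lt_iff₀ (by positivity)] at hLc
    nlinarith
  have hq : 0 < s ^ (-(1 / c) - 1) := by positivity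
  rw [hpow] at hsuper
  nlinarith [mul_lt_mul_of_pos_right hLa hq]

lemma le_of_deriv_lt_of_tendsto_atTop {X Z X' Z' : ℝ → ℝ} {ε t : ℝ} (hεt : ε < t)
    (hXc : ContinuousOn X (Icc ε t)) (hX : ∀ x ∈ Ioo ε t, HasDerivAt X (X' x) x)
    (hZ : ∀ x ∈ Ioc ε t, HasDerivAt Z (Z' x) x) (hZε : Tendsto Z (𝓝[>] ε) atTop)
    (hcontact : ∀ x ∈ Ioo ε t, X x = Z x → X' x < Z' x) : X t ≤ Z t := by
  obtain ⟨C, hC⟩ := isCompact_Icc.bddAbove_image hXc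
  obtain ⟨s₀, hCs₀, hεs₀, hs₀t⟩ :=
    ((hZε.eventually_gt_atTop C).and (Ioo_mem_nhdsGT hεt)).exists
  have hXs₀ : X s₀ ≤ Z s₀ := (hC ⟨s₀, ⟨hεs₀.le, hs₀t.le⟩, rfl⟩).trans hCs₀.le
  refine image_le_of_deriv_right_lt_deriv_boundary' (hXc.mono (Icc_subset_Icc_left hεs₀.le))
    (fun x hx => (hX x ⟨hεs₀.trans_le hx.1, hx.2⟩).hasDerivWithinAt) hXs₀
    (fun x hx => (hZ x ⟨hεs₀.trans_le hx.1, hx.2⟩).continuousAt.continuousWithinAt)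
    (fun x hx => (hZ x ⟨hεs₀.trans_le hx.1, hx.2.le⟩).hasDerivWithinAt)
    (fun x hx => hcontact x ⟨hεs₀.trans_le hx.1, hx.2⟩) ⟨hs₀t.le, le_rfl⟩

lemma le_add_mul_sub_rpow_of_deriv_add_mul_rpow_le {a c K L ε t : ℝ} {X : ℝ → ℝ} (ha : 0 < a)
    (hc : 0 < c) (hK : 0 ≤ K) (hL : 0 < L) (hLc : 1 / (c * a) < L ^ c) (hε : 0 < ε)
    (hεt : ε < t) (hdiff : ∀ s, 0 < s → DifferentiableAt ℝ X s)
    (hode : ∀ s, 0 < s → deriv X s + a * X s ^ (1 + c) ≤ a * K ^ (1 + c)) :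
    X t ≤ K + L * (t - ε) ^ (-(1 / c)) := by
  have hZ : ∀ x ∈ Ioc ε t, HasDerivAt (fun s => K + L * (s - ε) ^ (-(1 / c)))
      (-(L / c) * (x - ε) ^ (-(1 / c) - 1)) x := fun x hx => by
    have := (((hasDerivAt_id x).sub_const ε).rpow_const (p := -(1 / c))
      (Or.inl (sub_pos.2 hx.1).ne')).const_mul L |>.const_add K
    exact this.congr_deriv (by simp only [id]; ring)
  have hZε : Tendsto (fun s => K + L * (s - ε) ^ (-(1 / c))) (𝓝[>] ε) atTop := by
    have hshift : Tendsto (fun s => s - ε) (𝓝[>] ε) (𝓝[>] 0) := by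
      refine tendsto_nhdsWithin_iff.2
        ⟨?_, eventually_nhdsWithin_of_forall fun s hs => mem_Ioi.2 (sub_pos.2 hs)⟩
      simpa using ((continuous_sub_right ε).tendsto ε).mono_left nhdsWithin_le_nhds
    exact tendsto_atTop_add_const_left _ K <| Tendsto.const_mul_atTop hL <|
      (tendsto_rpow_neg_nhdsGT_zero (by simpa using hc)).comp hshift
  refine le_of_deriv_lt_of_tendsto_atTop hεt
    (fun x hx => (hdiff x (hε.trans_le hx.1)).continuousAt.continuousWithinAt)
    (fun x hx => (hdiff x (hε.trans hx.1)).hasDerivAt) hZ hZε fun x hx hXZ => ?_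
  calc deriv X x ≤ a * K ^ (1 + c) - a * X x ^ (1 + c) := by linarith [hode x (hε.trans hx.1)]
    _ < _ := by
      rw [hXZ, sub_lt_iff_lt_add]
      exact lt_deriv_add_mul_rpow_barrier ha hc hK hL hLc (sub_pos.2 hx.1)

theorem ode_comparison_generation_general
    (a c B : ℝ) (ha : 0 < a) (hc : 0 < c) (hB : 0 < B)
    (X : ℝ → ℝ)
    (hdiff : ∀ t, 0 < t → DifferentiableAt ℝ X t)
    (hode : ∀ t, 0 < t → deriv X t + a * X t ^ (1 + c) ≤ B) :
    ∀ t, 0 < t → X t ≤ (B / a) ^ (1 / (1 + c)) + (1 / (c * a)) ^ (1 / c) * t ^ (-(1 / c)) := by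
  intro t ht
  set K := (B / a) ^ (1 / (1 + c))
  set M := (1 / (c * a)) ^ (1 / c)
  have hKB : a * K ^ (1 + c) = B := by
    rw [← rpow_mul (div_pos hB ha).le, one_div_mul_cancel (by linarith), rpow_one,
      mul_div_cancel₀ _ ha.ne']
  have hM : 0 < M := by positivity
  have hMc : M ^ c = 1 / (c * a) := by
    rw [← rpow_mul (by positivity), one_div_mul_cancel hc.ne', rpow_one]
  have hbarrier : ∀ ε ∈ Ioo 0 t, X t ≤ K + (M + ε) * (t - ε) ^ (-(1 / c)) := fun ε hε =>
    le_add_mul_sub_rpow_of_deriv_add_mul_rpow_le ha hc (by positivity) (by linarith [hε.1])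
      (hMc ▸ rpow_lt_rpow hM.le (lt_add_of_pos_right M hε.1) hc) hε.1 hε.2 hdiff
      (hKB ▸ hode)
  have hlim : ContinuousWithinAt (fun ε => K + (M + ε) * (t - ε) ^ (-(1 / c))) (Ioi 0) 0 :=
    (continuousAt_const.add ((continuousAt_const.add continuousAt_id).mul
      ((continuousAt_const.sub continuousAt_id).rpow_const (Or.inl (by simpa using ht.ne'))))
      ).continuousWithinAt
  simpa using ge_of_tendsto hlim (eventually_of_mem (Ioo_mem_nhdsGT ht) hbarrier)

theorem ode_comparison_generation
    (a c B : ℝ) (ha : 0 < a) (hc : 0 < c) (hB : 0 < B)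
    (X : ℝ → ℝ) (hX0 : ∀ t, 0 < t → 0 ≤ X t)
    (hdiff : ∀ t, 0 < t → DifferentiableAt ℝ X t)
    (hode : ∀ t, 0 < t → deriv X t + a * X t ^ (1 + c) ≤ B) :
    ∀ t, 0 < t → X t ≤ (B / a) ^ (1 / (1 + c)) + (1 / (c * a)) ^ (1 / c) * t ^ (-(1 / c)) :=
  ode_comparison_generation_general a c B ha hc hB X hdiff hode
end

section
/- Let $\alpha \in (0,1)$, let $v_* \in \mathbb{R}^3$, and let $\sigma$ be a unit vector in $\mathbb{R}^3$. Define $T : \mathbb{R}^3 \setminus \{v_*\} \to \mathbb{R}^3$ by $T(v) = v_* + \alpha(v - v_*) + (1-\alpha)|v - v_*|\,\sigma$. Then $T$ is differentiable at every $v \neq v_*$ and the determinant of its derivative equals $\alpha^2\big(\alpha + (1-\alpha)\, \widehat{u}\cdot\sigma\big)$, where $\widehat{u} = \frac{v - v_*}{|v-v_*|}$. -/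
/-!
Away from `vs` the norm `w ↦ ‖w - vs‖` has derivative `w ↦ ⟪û, w⟫`, so the derivative of the
collision map is `α • id` plus the rank-one map `w ↦ (1 - α) ⟪û, w⟫ σ`. By the matrix determinant
lemma, `det (a • id + σ ⊗ f) = a ^ n (1 + f σ / a)`, which in dimension `n = 3` is the claimed
Jacobian `α ^ 2 (α + (1 - α) ⟪û, σ⟫)`.
-/

open scoped RealInnerProductSpace

namespace LinearMap

variable {R M : Type*} [CommRing R] [AddCommGroup M] [Module R M] [Module.Free R M]
  [Module.Finite R M]

theorem det_id_add_smulRight (f : M →ₗ[R] R) (x : M) :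
    (id + f.smulRight x).det = 1 + f x := by
  classical
  let b := Module.Free.chooseBasis R M
  have hmat : toMatrix b b (id + f.smulRight x) =
      1 + Matrix.replicateCol Unit (b.repr x) * Matrix.replicateRow Unit (f ∘ b) := by
    ext i j
    simp [toMatrix_apply, Matrix.one_apply, Finsupp.single_apply, Matrix.mul_apply, eq_comm,
      mul_comm]
  rw [← det_toMatrix b, hmat, Matrix.det_one_add_replicateCol_mul_replicateRow]
  conv_rhs => rw [← b.sum_repr x]
  simp only [map_sum, map_smul, smul_eq_mul, dotProduct, Function.comp_apply, mul_comm]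

theorem det_smul_id_add_smulRight {K V : Type*} [Field K] [AddCommGroup V] [Module K V]
    [FiniteDimensional K V] {a : K} (ha : a ≠ 0) (f : V →ₗ[K] K) (x : V) :
    (a • id + f.smulRight x).det = a ^ Module.finrank K V * (1 + a⁻¹ * f x) := by
  have : a • id + f.smulRight x = a • (id + (a⁻¹ • f).smulRight x) := by
    ext w
    simp [smul_smul, ha]
  rw [this, det_smul, det_id_add_smulRight]
  rfl

end LinearMap

theorem ContinuousLinearMap.det_smul_id_add_smulRight {𝕜 V : Type*} [NontriviallyNormedField 𝕜]
    [NormedAddCommGroup V] [NormedSpace 𝕜 V] [FiniteDimensional 𝕜 V] {a : 𝕜} (ha : a ≠ 0)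
    (f : V →L[𝕜] 𝕜) (x : V) :
    (a • ContinuousLinearMap.id 𝕜 V + f.smulRight x).det =
      a ^ Module.finrank 𝕜 V * (1 + a⁻¹ * f x) :=
  LinearMap.det_smul_id_add_smulRight ha (f : V →ₗ[𝕜] 𝕜) x

variable {F : Type*} [NormedAddCommGroup F] [InnerProductSpace ℝ F]

theorem hasFDerivAt_norm {x : F} (hx : x ≠ 0) :
    HasFDerivAt (‖·‖) (‖x‖⁻¹ • innerSL ℝ x) x := by
  have hsq := (hasStrictFDerivAt_norm_sq x).hasFDerivAt.sqrt (pow_ne_zero 2 (norm_ne_zero_iff.2 hx))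
  simp only [Real.sqrt_sq (norm_nonneg _)] at hsq
  convert hsq using 1
  ext w
  simp only [smul_apply, coe_innerSL_apply, smul_eq_mul, one_div, mul_inv_rev, nsmul_eq_mul,
    Nat.cast_ofNat]
  field_simp

def collisionMap (α : ℝ) (vs σ v : F) : F :=
  vs + α • (v - vs) + ((1 - α) * ‖v - vs‖) • σ

theorem hasFDerivAt_collisionMap (α : ℝ) {vs v : F} (σ : F) (hv : v ≠ vs) :
    HasFDerivAt (collisionMap α vs σ)
      (α • .id ℝ F + (((1 - α) * ‖v - vs‖⁻¹) • innerSL ℝ (v - vs)).smulRight σ) v := by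
  have hsub : HasFDerivAt (· - vs) (.id ℝ F) v := (hasFDerivAt_id v).sub_const vs
  have hnorm := ((hasFDerivAt_norm (sub_ne_zero.2 hv)).comp v hsub).const_mul (1 - α)
  convert ((hsub.const_smul α).const_add vs).add (hnorm.smul_const σ) using 1
  · rfl
  · rw [ContinuousLinearMap.comp_id, smul_smul]

theorem det_fderiv_collisionMap [FiniteDimensional ℝ F] {α : ℝ} (hα : α ≠ 0) {vs v : F} (σ : F)
    (hv : v ≠ vs) :
    (fderiv ℝ (collisionMap α vs σ) v).det =
      α ^ (Module.finrank ℝ F - 1) * (α + (1 - α) * ⟪‖v - vs‖⁻¹ • (v - vs), σ⟫) := by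
  have : Nontrivial F := ⟨⟨v - vs, 0, sub_ne_zero.2 hv⟩⟩
  obtain ⟨n, hn⟩ := Nat.exists_eq_add_one_of_ne_zero (Module.finrank_pos (R := ℝ) (M := F)).ne'
  rw [(hasFDerivAt_collisionMap α σ hv).fderiv, ContinuousLinearMap.det_smul_id_add_smulRight hα,
    hn, Nat.add_sub_cancel, pow_succ]
  simp only [smul_apply, innerSL_apply_apply, smul_eq_mul, real_inner_smul_left]
  field_simp

theorem collision_map_jacobian_general
    (α : ℝ) (hα0 : 0 < α)
    (vs σ : EuclideanSpace ℝ (Fin 3))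
    (T : EuclideanSpace ℝ (Fin 3) → EuclideanSpace ℝ (Fin 3))
    (hT : ∀ v, T v = vs + α • (v - vs) + ((1 - α) * ‖v - vs‖) • σ) :
    ∀ v, v ≠ vs → DifferentiableAt ℝ T v ∧
      (fderiv ℝ T v).det =
        α ^ 2 * (α + (1 - α) * inner ℝ ((‖v - vs‖⁻¹ : ℝ) • (v - vs)) σ) := by
  intro v hv
  obtain rfl : T = collisionMap α vs σ := funext hT
  refine ⟨(hasFDerivAt_collisionMap α σ hv).differentiableAt, ?_⟩
  rw [det_fderiv_collisionMap hα0.ne' σ hv, finrank_euclideanSpace_fin]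

theorem collision_map_jacobian
    (α : ℝ) (hα0 : 0 < α) (hα1 : α < 1)
    (vs σ : EuclideanSpace ℝ (Fin 3)) (hσ : ‖σ‖ = 1)
    (T : EuclideanSpace ℝ (Fin 3) → EuclideanSpace ℝ (Fin 3))
    (hT : ∀ v, T v = vs + α • (v - vs) + ((1 - α) * ‖v - vs‖) • σ) :
    ∀ v, v ≠ vs → DifferentiableAt ℝ T v ∧
      (fderiv ℝ T v).det =
        α ^ 2 * (α + (1 - α) * inner ℝ ((‖v - vs‖⁻¹ : ℝ) • (v - vs)) σ) :=
  collision_map_jacobian_general α hα0 vs σ T hT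
end
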